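/- Let G be a matching covered graph with a perfect matching M, and let C₁ and C₂ be two vertex-disjoint cycles in G such that M ∩ E(C_i) is a perfect matching of C_i for both i ∈ {1,2}. If X ⊆ V(G) is a set of vertices with ∂(X) ∩ E(C₁) ≠ ∅ and ∂(X) ∩ E(C₂) ≠ ∅, then ∂(X) is not a tight cut of G. -/

import Mathlib

open SimpleGraph

namespace PaperMM

/-- A (finite, simple) graph bundled with its vertex type. -/
structure Graph : Type 1 where
  V : Type
  adj : SimpleGraph V

/-- `G` has a perfect matching. -/
def HasPM {V : Type} (G : SimpleGraph V) : Prop :=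
  ∃ M : G.Subgraph, M.IsPerfectMatching

/-- `X ⊆ V(G)` is conformal: `G − X` has a perfect matching. -/
def ConformalSet {V : Type} (G : SimpleGraph V) (X : Set V) : Prop :=
  HasPM (G.induce Xᶜ)

/-- The result of bicontracting the degree-2 vertex `v` with neighbours `u₀, u₁`:
the three vertices are identified into (the vertex previously called) `v`,
loops and parallel edges being suppressed. -/
def bicontractAt {V : Type} (G : SimpleGraph V) (v u₀ u₁ : V) :
    SimpleGraph {x : V // x ≠ u₀ ∧ x ≠ u₁} where
  Adj a b :=
    (a.1 ≠ v ∧ b.1 ≠ v ∧ G.Adj a.1 b.1) ∨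
    (a.1 = v ∧ b.1 ≠ v ∧ (G.Adj b.1 u₀ ∨ G.Adj b.1 u₁)) ∨
    (b.1 = v ∧ a.1 ≠ v ∧ (G.Adj a.1 u₀ ∨ G.Adj a.1 u₁))
  symm := by
    constructor
    rintro a b (⟨h1, h2, h3⟩ | ⟨h1, h2, h3⟩ | ⟨h1, h2, h3⟩)
    · exact Or.inl ⟨h2, h1, h3.symm⟩
    · exact Or.inr (Or.inr ⟨h1, h2, h3⟩)
    · exact Or.inr (Or.inl ⟨h1, h2, h3⟩)
  loopless := by
    constructor
    rintro a (⟨h1, _h2, h3⟩ | ⟨h1, h2, _h3⟩ | ⟨h1, h2, _h3⟩)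
    · exact G.ne_of_adj h3 rfl
    · exact h2 h1
    · exact h2 h1

/-- `H` is obtained from `G` by a single bicontraction of a vertex of degree two. -/
def Bicontract (G H : Graph) : Prop :=
  ∃ v u₀ u₁ : G.V, u₀ ≠ u₁ ∧ G.adj.neighborSet v = {u₀, u₁} ∧
    Nonempty (H.adj ≃g bicontractAt G.adj v u₀ u₁)

/-- `H` is a matching minor of `G`: a graph isomorphic to `H` can be obtained from
a conformal subgraph of `G` by repeated bicontractions. -/
def IsMatchingMinor (H G : Graph) : Prop :=
  ∃ (H' : G.adj.Subgraph) (K : Graph),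
    ConformalSet G.adj H'.verts ∧
    Relation.ReflTransGen Bicontract ⟨↥H'.verts, H'.coe⟩ K ∧
    Nonempty (H.adj ≃g K.adj)

/-- The edge cut `∂(X)`: all edges of `G` with exactly one endpoint in `X`. -/
def edgeCut {V : Type} (G : SimpleGraph V) (X : Set V) : Set (Sym2 V) :=
  {e | e ∈ G.edgeSet ∧ ∃ a b : V, e = s(a, b) ∧ a ∈ X ∧ b ∉ X}

/-- `∂(X)` is a tight cut: every perfect matching contains exactly one of its edges. -/
def IsTightCut {V : Type} (G : SimpleGraph V) (X : Set V) : Prop :=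
  ∀ M : G.Subgraph, M.IsPerfectMatching → (M.edgeSet ∩ edgeCut G X).ncard = 1

/-- `G` is matching covered: connected and every edge lies in a perfect matching. -/
def MatchingCovered {V : Type} (G : SimpleGraph V) : Prop :=
  G.Connected ∧ ∀ e ∈ G.edgeSet, ∃ M : G.Subgraph, M.IsPerfectMatching ∧ e ∈ M.edgeSet

/-- `(V₁, V₂)` is a bipartition of `G` into two independent sets. -/
def IsBipartition {V : Type} (G : SimpleGraph V) (V₁ V₂ : Set V) : Prop :=
  V₁ ∪ V₂ = Set.univ ∧ V₁ ∩ V₂ = ∅ ∧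
    ∀ a b : V, G.Adj a b → ((a ∈ V₁ ∧ b ∈ V₂) ∨ (a ∈ V₂ ∧ b ∈ V₁))

def IsBipartiteGraph {V : Type} (G : SimpleGraph V) : Prop :=
  ∃ V₁ V₂ : Set V, IsBipartition G V₁ V₂

/-- A brace: a bipartite matching covered graph with no non-trivial tight cut. -/
def IsBrace {V : Type} (G : SimpleGraph V) : Prop :=
  IsBipartiteGraph G ∧ MatchingCovered G ∧
    ¬ ∃ X : Set V, IsTightCut G X ∧ 2 ≤ X.ncard ∧ 2 ≤ Xᶜ.ncard

/-- A perfect matching decomposition: a cubic tree `tree` together with a bijection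
from its leaves to the vertices of `G`. -/
structure PMDecomp {V : Type} (G : SimpleGraph V) where
  T : Type
  tree : SimpleGraph T
  isTree : tree.IsTree
  cubic : ∀ t : T, (tree.neighborSet t).ncard = 1 ∨ (tree.neighborSet t).ncard = 3
  leafEquiv : {t : T // (tree.neighborSet t).ncard = 1} ≃ V

/-- The side of the partition of `V(G)` induced by the tree edge `{t₁, t₂}`
corresponding to `t₁`. -/
def PMDecomp.sideSet {V : Type} {G : SimpleGraph V} (D : PMDecomp G) (t₁ t₂ : D.T) :
    Set V :=
  {v | (D.tree.deleteEdges {s(t₁, t₂)}).Reachable t₁ (D.leafEquiv.symm v).1}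

/-- The matching porosity of `X`: the maximum number of edges of `∂(X)` in a
perfect matching of `G`. -/
noncomputable def matchingPorosity {V : Type} (G : SimpleGraph V) (X : Set V) : ℕ :=
  sSup {n | ∃ M : G.Subgraph, M.IsPerfectMatching ∧ n = (M.edgeSet ∩ edgeCut G X).ncard}

/-- The width of a perfect matching decomposition. -/
noncomputable def PMDecomp.width {V : Type} {G : SimpleGraph V} (D : PMDecomp G) : ℕ :=
  sSup {n | ∃ t₁ t₂ : D.T, D.tree.Adj t₁ t₂ ∧ n = matchingPorosity G (D.sideSet t₁ t₂)}

/-- The perfect matching width of `G`. -/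
noncomputable def pmw {V : Type} (G : SimpleGraph V) : ℕ :=
  sInf {w | ∃ D : PMDecomp G, D.width ≤ w}

/-! ### Concrete graphs -/

/-- The `(n × m)`-grid. -/
def gridGraph (n m : ℕ) : SimpleGraph (Fin n × Fin m) :=
  SimpleGraph.fromRel (fun p q =>
    (p.1 = q.1 ∧ p.2.1 + 1 = q.2.1) ∨ (p.2 = q.2 ∧ p.1.1 + 1 = q.1.1))

/-- The single-crossing matching grid of order `k`: the `(2k × 2k)`-grid whose
central 4-cycle (`(k,k),(k,k+1),(k+1,k+1),(k+1,k)` in 1-based coordinates) is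
identified with a 4-cycle of `K_{3,3}`; `Sum.inr 0` and `Sum.inr 1` are the two
remaining vertices of `K_{3,3}`. -/
def singleCrossingMatchingGrid (k : ℕ) :
    SimpleGraph ((Fin (2*k) × Fin (2*k)) ⊕ Fin 2) :=
  SimpleGraph.fromRel (fun x y =>
    (∃ p q : Fin (2*k) × Fin (2*k), x = Sum.inl p ∧ y = Sum.inl q ∧
      ((p.1 = q.1 ∧ p.2.1 + 1 = q.2.1) ∨ (p.2 = q.2 ∧ p.1.1 + 1 = q.1.1))) ∨
    (∃ p : Fin (2*k) × Fin (2*k), x = Sum.inl p ∧ y = Sum.inr 0 ∧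
      ((p.1.1 = k - 1 ∧ p.2.1 = k) ∨ (p.1.1 = k ∧ p.2.1 = k - 1))) ∨
    (∃ p : Fin (2*k) × Fin (2*k), x = Sum.inl p ∧ y = Sum.inr 1 ∧
      ((p.1.1 = k - 1 ∧ p.2.1 = k - 1) ∨ (p.1.1 = k ∧ p.2.1 = k))) ∨
    (x = Sum.inr 0 ∧ y = Sum.inr 1))

/-- The inside-out single-crossing matching grid of order `k`: the `(2k × 2k)`-grid
together with the two remaining vertices of a `K_{3,3}` whose chosen 4-cycle has been
identified with the four corners (its edges being deleted). -/
def insideOutSingleCrossingMatchingGrid (k : ℕ) :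
    SimpleGraph ((Fin (2*k) × Fin (2*k)) ⊕ Fin 2) :=
  SimpleGraph.fromRel (fun x y =>
    (∃ p q : Fin (2*k) × Fin (2*k), x = Sum.inl p ∧ y = Sum.inl q ∧
      ((p.1 = q.1 ∧ p.2.1 + 1 = q.2.1) ∨ (p.2 = q.2 ∧ p.1.1 + 1 = q.1.1))) ∨
    (∃ p : Fin (2*k) × Fin (2*k), x = Sum.inl p ∧ y = Sum.inr 0 ∧
      ((p.1.1 = 0 ∧ p.2.1 = 2*k - 1) ∨ (p.1.1 = 2*k - 1 ∧ p.2.1 = 0))) ∨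
    (∃ p : Fin (2*k) × Fin (2*k), x = Sum.inl p ∧ y = Sum.inr 1 ∧
      ((p.1.1 = 0 ∧ p.2.1 = 0) ∨ (p.1.1 = 2*k - 1 ∧ p.2.1 = 2*k - 1))) ∨
    (x = Sum.inr 0 ∧ y = Sum.inr 1))

/-- The cylindrical matching grid `CG_k` of order `k` (0-based coordinates:
vertex `(i, j)` is `v_{j+1}^{i+1}` of the paper). -/
def cylindricalMatchingGrid (k : ℕ) : SimpleGraph (Fin k × Fin (4*k)) :=
  SimpleGraph.fromRel (fun x y =>
    (x.1 = y.1 ∧ (x.2.1 + 1) % (4*k) = y.2.1) ∨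
    (x.1.1 + 1 = y.1.1 ∧ x.2.1 % 4 = 0 ∧ x.2.1 + 1 = y.2.1) ∨
    (y.1.1 + 1 = x.1.1 ∧ x.2.1 % 4 = 2 ∧ x.2.1 + 1 = y.2.1))

/-- The edges of the canonical matching of `CG_k`. -/
def cmgCanonicalEdges (k : ℕ) : Set (Sym2 (Fin k × Fin (4*k))) :=
  {e | ∃ x y : Fin k × Fin (4*k), e = s(x, y) ∧ x.1 = y.1 ∧
        x.2.1 % 2 = 0 ∧ x.2.1 + 1 = y.2.1}

/-- The edges of the alternating matching of `CG_k` (for `k` even): the canonical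
matching with `M ∩ E(C_i)` replaced by `E(C_i) ∖ M` on every odd (1-based) cycle. -/
def cmgAlternatingEdges (k : ℕ) : Set (Sym2 (Fin k × Fin (4*k))) :=
  {e | ∃ x y : Fin k × Fin (4*k), e = s(x, y) ∧ x.1 = y.1 ∧
        (x.2.1 + 1) % (4*k) = y.2.1 ∧ (x.1.1 + x.2.1) % 2 = 1}

/-- The cylindrical single-crossing grid of order `h`: `CG_{4h}` plus the two
crossing edges `v^1_1 v^1_{8h+4}` and `v^1_{4h+1} v^1_{12h+4}`. -/
def cylindricalSingleCrossingGrid (h : ℕ) :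
    SimpleGraph (Fin (4*h) × Fin (4*(4*h))) :=
  cylindricalMatchingGrid (4*h) ⊔ SimpleGraph.fromRel (fun x y =>
    x.1.1 = 0 ∧ y.1.1 = 0 ∧
      ((x.2.1 = 0 ∧ y.2.1 = 8*h + 3) ∨ (x.2.1 = 4*h ∧ y.2.1 = 12*h + 3)))

/-- The cylindrical single-jump grid of order `k`: `CG_k` plus the edge `v^k_1 v^1_2`. -/
def cylindricalSingleJumpGrid (k : ℕ) : SimpleGraph (Fin k × Fin (4*k)) :=
  cylindricalMatchingGrid k ⊔ SimpleGraph.fromRel (fun x y =>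
    x.1.1 = k - 1 ∧ x.2.1 = 0 ∧ y.1.1 = 0 ∧ y.2.1 = 1)

/-- The shallow vortex matching grid `SVMG_k` of order `k`. -/
def shallowVortexMatchingGrid (k : ℕ) : SimpleGraph (Fin (2*k) × Fin (8*k)) :=
  SimpleGraph.fromRel (fun x y =>
    (x.1 = y.1 ∧ (x.2.1 + 1) % (8*k) = y.2.1) ∨
    (x.1.1 + 1 = y.1.1 ∧ x.2.1 % 4 = 0 ∧ x.2.1 + 1 = y.2.1) ∨
    (y.1.1 + 1 = x.1.1 ∧ x.2.1 % 4 = 2 ∧ x.2.1 + 1 = y.2.1) ∨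
    (x.1.1 = 0 ∧ y.1.1 = 0 ∧ x.2.1 % 4 = 1 ∧ (x.2.1 + 5) % (8*k) = y.2.1))

/-- The refined vortex `RV_k` of order `k`. -/
def refinedVortex (k : ℕ) : SimpleGraph (Fin (2*k) × Fin (4*k)) :=
  SimpleGraph.fromRel (fun x y =>
    (x.1 = y.1 ∧ (x.2.1 + 1) % (4*k) = y.2.1) ∨
    (x.1.1 + 1 = y.1.1 ∧ x.2 = y.2) ∨
    (x.1.1 = 0 ∧ y.1.1 = 0 ∧ x.2.1 % 4 = 1 ∧ (x.2.1 + 3) % (4*k) = y.2.1))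

/-- The (ordinary) single-crossing grid of order `n`: the `(2n × 2n)`-grid plus the
two crossing edges `{(n,n),(n+1,n+1)}` and `{(n,n+1),(n+1,n)}` (1-based). -/
def singleCrossingGrid (n : ℕ) : SimpleGraph (Fin (2*n) × Fin (2*n)) :=
  gridGraph (2*n) (2*n) ⊔ SimpleGraph.fromRel (fun p q =>
    (p.1.1 = n - 1 ∧ p.2.1 = n - 1 ∧ q.1.1 = n ∧ q.2.1 = n) ∨
    (p.1.1 = n - 1 ∧ p.2.1 = n ∧ q.1.1 = n ∧ q.2.1 = n - 1))

/-! ### M-conformality -/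

/-- `X` is `M`-conformal: every vertex outside `X` is matched by `M` to a vertex
outside `X`, i.e. `M ∩ E(G − X)` is a perfect matching of `G − X`. -/
def MConformalSet {V : Type} {G : SimpleGraph V} (M : G.Subgraph) (X : Set V) : Prop :=
  ∀ v ∈ Xᶜ, ∃ w ∈ Xᶜ, M.Adj v w

/-- A walk is internally `M`-conformal: it alternates between edges outside `M`
and edges of `M`, starting and ending with edges not in `M`. -/
def InternallyMConformal {V : Type} {G : SimpleGraph V} (M : G.Subgraph)
    {a b : V} (P : G.Walk a b) : Prop :=
  ∀ (i : ℕ) (h : i < P.edges.length), (P.edges.get ⟨i, h⟩ ∈ M.edgeSet ↔ i % 2 = 1)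

/-! ### Subdivisions -/

/-- A model of a subdivision of `H` inside `B`: branch vertices together with
internally disjoint paths representing the edges of `H`. -/
structure SubdivisionModel {V U : Type} (B : SimpleGraph V) (H : SimpleGraph U) where
  branch : U → V
  branch_inj : Function.Injective branch
  path : ∀ ⦃u w : U⦄, H.Adj u w → B.Walk (branch u) (branch w)
  path_isPath : ∀ ⦃u w : U⦄ (h : H.Adj u w), (path h).IsPath
  path_symm : ∀ ⦃u w : U⦄ (h : H.Adj u w), path h.symm = (path h).reverse
  branch_meet : ∀ ⦃u w : U⦄ (h : H.Adj u w) (z : U),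
      branch z ∈ (path h).support → z = u ∨ z = w
  path_disjoint : ∀ ⦃u w u' w' : U⦄ (h : H.Adj u w) (h' : H.Adj u' w'),
      s(u, w) ≠ s(u', w') → ∀ x : V, x ∈ (path h).support → x ∈ (path h').support →
        (x = branch u ∨ x = branch w) ∧ (x = branch u' ∨ x = branch w')

/-- The vertices of the subdivision in the host graph. -/
def SubdivisionModel.verts {V U : Type} {B : SimpleGraph V} {H : SimpleGraph U}
    (S : SubdivisionModel B H) : Set V :=
  {x | ∃ u w : U, ∃ h : H.Adj u w, x ∈ (S.path h).support}

/-- The edges of the subdivision in the host graph. -/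
def SubdivisionModel.edges' {V U : Type} {B : SimpleGraph V} {H : SimpleGraph U}
    (S : SubdivisionModel B H) : Set (Sym2 V) :=
  {e | ∃ u w : U, ∃ h : H.Adj u w, e ∈ (S.path h).edges}

/-- A model of a bisubdivision: every edge of `H` is replaced by a path of odd
length (i.e. every edge is subdivided an even number of times). -/
structure BisubdivisionModel {V U : Type} (B : SimpleGraph V) (H : SimpleGraph U)
    extends SubdivisionModel B H where
  path_odd : ∀ ⦃u w : U⦄ (h : H.Adj u w), Odd (path h).length

/-- `M` contains the canonical matching of the (bi)subdivision `S` of `CG_N`: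
`M ∩ E(W)` is a perfect matching of `W` in which every branch vertex is matched
along the subdivided image of the canonical-matching edge at the corresponding
grid vertex. -/
def ContainsCanonical {V : Type} {B : SimpleGraph V} {N : ℕ}
    (S : SubdivisionModel B (cylindricalMatchingGrid N)) (M : B.Subgraph) : Prop :=
  (∀ x ∈ S.verts, ∃ y ∈ S.verts, M.Adj x y ∧ s(x, y) ∈ S.edges') ∧
  (∀ (u : Fin N × Fin (4*N)) (y : V), M.Adj (S.branch u) y →
    ∃ w : Fin N × Fin (4*N), ∃ h : (cylindricalMatchingGrid N).Adj u w,
      s(u, w) ∈ cmgCanonicalEdges N ∧ s(S.branch u, y) ∈ (S.path h).edges)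

/-- The vertex set, in the host graph, of the subdivided image of the `j`-th
(0-based) concentric cycle of `CG_N`. -/
def cycVerts {V : Type} {B : SimpleGraph V} {N : ℕ}
    (S : SubdivisionModel B (cylindricalMatchingGrid N)) (j : ℕ) : Set V :=
  {x | ∃ u w : Fin N × Fin (4*N), ∃ h : (cylindricalMatchingGrid N).Adj u w,
      u.1.1 = j ∧ w.1.1 = j ∧ x ∈ (S.path h).support}

/-! ### Separations, minors, connectivity -/

/-- `(A, B)` is a separation of `G`. -/
def IsSeparation {V : Type} (G : SimpleGraph V) (A B : Set V) : Prop :=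
  A ∪ B = Set.univ ∧ ∀ a b : V, G.Adj a b → a ∈ A \ B → b ∉ B \ A

/-- `H` is a minor of `G` (branch-set model). -/
def IsMinor {U V : Type} (H : SimpleGraph U) (G : SimpleGraph V) : Prop :=
  ∃ φ : U → Set V,
    (∀ u, (φ u).Nonempty) ∧
    (∀ u, ∀ x, ∀ hx : x ∈ φ u, ∀ y, ∀ hy : y ∈ φ u,
      (G.induce (φ u)).Reachable ⟨x, hx⟩ ⟨y, hy⟩) ∧
    (Pairwise fun u w => Disjoint (φ u) (φ w)) ∧
    (∀ u w : U, H.Adj u w → ∃ x ∈ φ u, ∃ y ∈ φ w, G.Adj x y)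

/-- `G` is quasi-4-connected: 3-connected and every separation of order 3 has a
side containing at most one extra vertex. -/
def QuasiFourConnected {V : Type} (G : SimpleGraph V) : Prop :=
  (4 ≤ Nat.card V ∧
    ∀ A B : Set V, IsSeparation G A B → (A ∩ B).ncard ≤ 2 → A ⊆ B ∨ B ⊆ A) ∧
  (∀ A B : Set V, IsSeparation G A B → (A ∩ B).ncard = 3 →
    (A \ B).ncard ≤ 1 ∨ (B \ A).ncard ≤ 1)

/-! ### Walls -/

/-- The `(2n × n)`-grid with every odd edge of every odd column and every even edge
of every even column deleted (1-based parities). -/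
def preWall (n : ℕ) : SimpleGraph (Fin (2*n) × Fin n) :=
  SimpleGraph.fromRel (fun p q =>
    (p.1 = q.1 ∧ p.2.1 + 1 = q.2.1) ∨
    (p.2 = q.2 ∧ p.1.1 + 1 = q.1.1 ∧ ¬ p.1.1 % 2 = p.2.1 % 2))

/-- The vertices of the elementary `n`-wall: all vertices of `preWall n` of degree
at least two. -/
def elementaryWallVerts (n : ℕ) : Set (Fin (2*n) × Fin n) :=
  {v | 2 ≤ ((preWall n).neighborSet v).ncard}

/-- The elementary `n`-wall. -/
def elementaryWall (n : ℕ) : SimpleGraph ↥(elementaryWallVerts n) :=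
  (preWall n).induce (elementaryWallVerts n)

/-- The vertices on the perimeter of the elementary `n`-wall. -/
def wallPerimSet (n : ℕ) : Set (Fin (2*n) × Fin n) :=
  {v | v.1.1 = 0 ∨ v.1.1 = 2*n - 1 ∨ v.2.1 = 0 ∨ v.2.1 = n - 1}

/-- The (1-based) index of the concentric cycle of the centred layering of the
elementary `n`-wall containing a given vertex. -/
def wallRingIdx (n : ℕ) (v : Fin (2*n) × Fin n) : ℕ :=
  max ((if v.1.1 < n then n - 1 - v.1.1 else v.1.1 - n) / 2)
      (if v.2.1 < n / 2 then n / 2 - 1 - v.2.1 else v.2.1 - n / 2) + 1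

/-- The vertex set, in the host graph, of the `r`-th concentric cycle of a wall
given by a subdivision model. -/
def wallRingVertsG {V : Type} {G : SimpleGraph V} {n : ℕ}
    (S : SubdivisionModel G (elementaryWall n)) (r : ℕ) : Set V :=
  {x | ∃ u w, ∃ h : (elementaryWall n).Adj u w,
      wallRingIdx n u.1 = r ∧ wallRingIdx n w.1 = r ∧ x ∈ (S.path h).support}

/-- The vertex set, in the host graph, of the union of the first `r` concentric
cycles of a wall given by a subdivision model. -/
def wallInnerVertsG {V : Type} {G : SimpleGraph V} {n : ℕ}
    (S : SubdivisionModel G (elementaryWall n)) (r : ℕ) : Set V :=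
  {x | ∃ u w, ∃ h : (elementaryWall n).Adj u w,
      wallRingIdx n u.1 = wallRingIdx n w.1 ∧ wallRingIdx n u.1 ≤ r ∧
      x ∈ (S.path h).support}

/-- The vertex set, in the host graph, of the perimeter of a wall given by a
subdivision model. -/
def wallPerimVertsG {V : Type} {G : SimpleGraph V} {n : ℕ}
    (S : SubdivisionModel G (elementaryWall n)) : Set V :=
  {x | ∃ u w, ∃ h : (elementaryWall n).Adj u w,
      u.1 ∈ wallPerimSet n ∧ w.1 ∈ wallPerimSet n ∧ x ∈ (S.path h).support}

/-- The (1-based) index of the concentric cycle of the centred layering of the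
`(n × n)`-grid (`n` even) containing a given vertex. -/
def gridRing (n : ℕ) (p : Fin n × Fin n) : ℕ :=
  max (if p.1.1 < n / 2 then n / 2 - 1 - p.1.1 else p.1.1 - n / 2)
      (if p.2.1 < n / 2 then n / 2 - 1 - p.2.1 else p.2.1 - n / 2) + 1

/-! ### Matrices and permanents -/

/-- The permanent of an `n × n` matrix of naturals. -/
def perm (n : ℕ) (A : Matrix (Fin n) (Fin n) ℕ) : ℕ :=
  ∑ σ : Equiv.Perm (Fin n), ∏ i : Fin n, A i (σ i)

/-- The bipartite graph `B(A)` associated with a 0/1 matrix `A`: two copies of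
`{1,…,n}`, with `uᵢ` adjacent to `wⱼ` iff `A i j = 1`. -/
def matrixGraph (n : ℕ) (A : Matrix (Fin n) (Fin n) ℕ) :
    SimpleGraph (Fin n ⊕ Fin n) :=
  SimpleGraph.fromRel (fun x y => ∃ i j : Fin n, x = Sum.inl i ∧ y = Sum.inr j ∧ A i j = 1)

/-- The last index of `Fin n` (row/column `n`). -/
def lastIdx (n : ℕ) (_hn : 2 ≤ n) : Fin n := ⟨n - 1, by omega⟩

/-- The second-to-last index of `Fin n` (row/column `n − 1`). -/
def sndIdx (n : ℕ) (_hn : 2 ≤ n) : Fin n := ⟨n - 2, by omega⟩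

/-- The bicontraction of `A` at its last row: replace column `n−1` by the entrywise
maximum of columns `n−1` and `n`, then delete row `n` and column `n`. -/
def bicontractMatrix (n : ℕ) (hn : 2 ≤ n) (A : Matrix (Fin n) (Fin n) ℕ) :
    Matrix (Fin (n-1)) (Fin (n-1)) ℕ :=
  fun j i =>
    if (i : ℕ) = n - 2 then
      max (A (Fin.castLE (Nat.sub_le n 1) j) (sndIdx n hn))
          (A (Fin.castLE (Nat.sub_le n 1) j) (lastIdx n hn))
    else A (Fin.castLE (Nat.sub_le n 1) j) (Fin.castLE (Nat.sub_le n 1) i)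

end PaperMM

/-! Flipping the matching along an `M`-alternating cycle `C` gives the perfect matching
`M Δ E(C)`. If `∂(X)` is tight, then, as `C` meets `∂(X)`, the unique edge of `M` in `∂(X)`
must lie on `C`: otherwise `M Δ E(C)` would contain it together with an edge of `C ∩ ∂(X)`.
So that edge lies on both `C₁` and `C₂`, which are disjoint. -/

namespace SimpleGraph

variable {V : Type*} {G : SimpleGraph V} {M : G.Subgraph} {a : V} {c : G.Walk a a}

lemma Walk.IsCycle.isAlternating_of_forall_exists_adj (hM : M.IsPerfectMatching)
    (hc : c.IsCycle) (hMc : ∀ v ∈ c.support, ∃ w, M.Adj v w ∧ s(v, w) ∈ c.edges) :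
    c.toSubgraph.spanningCoe.IsAlternating M.spanningCoe := by
  intro v w w' hww' hvw hvw'
  obtain ⟨u, hMu, huc⟩ := hMc v (c.fst_mem_support_of_mem_edges
    (Walk.adj_toSubgraph_iff_mem_edges.mp hvw))
  have hvu : c.toSubgraph.spanningCoe.Adj v u := Walk.adj_toSubgraph_iff_mem_edges.mpr huc
  have huw' : w ≠ u → w' = u := fun hwu =>
    (hc.isCycles_spanningCoe_toSubgraph.existsUnique_ne_adj hvw).unique ⟨hww', hvw'⟩ ⟨hwu, hvu⟩
  simp only [Subgraph.spanningCoe_adj]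
  constructor
  · exact fun hMw hMw' => hww' (hM.1.eq_of_adj_left hMw hMw')
  · intro hMw'
    by_contra hMw
    have hwu : w ≠ u := fun h => hMw (h ▸ hMu)
    exact hMw' (huw' hwu ▸ hMu)

lemma Subgraph.IsPerfectMatching.exists_edgeSet_eq_symmDiff_cycle (hM : M.IsPerfectMatching)
    (hc : c.IsCycle) (hMc : ∀ v ∈ c.support, ∃ w, M.Adj v w ∧ s(v, w) ∈ c.edges) :
    ∃ M' : G.Subgraph, M'.IsPerfectMatching ∧ M'.edgeSet = symmDiff M.edgeSet c.edgeSet := by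
  set H := symmDiff M.spanningCoe c.toSubgraph.spanningCoe
  have hHG : H ≤ G := fun v w hvw => by
    rcases hvw with ⟨hM, -⟩ | ⟨hc, -⟩
    exacts [hM.adj_sub, hc.adj_sub]
  have hH := hM.symmDiff_of_isAlternating (hc.isAlternating_of_forall_exists_adj hM hMc)
    hc.isCycles_spanningCoe_toSubgraph
  refine ⟨SimpleGraph.toSubgraph H hHG,
    Subgraph.isPerfectMatching_iff.mpr (Subgraph.isPerfectMatching_iff.mp hH), ?_⟩
  ext e
  induction e using Sym2.ind with
  | _ v w =>
    simp [H, symmDiff_def, Walk.adj_toSubgraph_iff_mem_edges]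

end SimpleGraph

namespace PaperMM

lemma IsTightCut.exists_mem_of_edgeSet_eq_symmDiff {V : Type} {G : SimpleGraph V} {X : Set V}
    (hX : IsTightCut G X) {M M' : G.Subgraph} (hM : M.IsPerfectMatching)
    (hM' : M'.IsPerfectMatching) {S : Set (Sym2 V)} (hM'S : M'.edgeSet = symmDiff M.edgeSet S)
    (hSX : (S ∩ edgeCut G X).Nonempty) : ∃ e ∈ M.edgeSet ∩ edgeCut G X, e ∈ S := by
  by_contra! hMS
  obtain ⟨g, hg⟩ := Set.ncard_eq_one.mp (hX M hM)
  obtain ⟨g', hg'⟩ := Set.ncard_eq_one.mp (hX M' hM')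
  obtain ⟨e, heS, heX⟩ := hSX
  have hgM : g ∈ M.edgeSet ∩ edgeCut G X := hg ▸ rfl
  have hgM' : g ∈ M'.edgeSet ∩ edgeCut G X :=
    ⟨hM'S ▸ Or.inl ⟨hgM.1, hMS g hgM⟩, hgM.2⟩
  have heM' : e ∈ M'.edgeSet ∩ edgeCut G X :=
    ⟨hM'S ▸ Or.inr ⟨heS, fun heM => hMS e ⟨heM, heX⟩ heS⟩, heX⟩
  rw [hg'] at hgM' heM'
  exact hMS g hgM (hgM'.trans heM'.symm ▸ heS)

lemma IsTightCut.exists_mem_edges_of_isCycle {V : Type} {G : SimpleGraph V} {X : Set V}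
    (hX : IsTightCut G X) {M : G.Subgraph} (hM : M.IsPerfectMatching) {a : V}
    {c : G.Walk a a} (hc : c.IsCycle)
    (hMc : ∀ v ∈ c.support, ∃ w ∈ c.support, M.Adj v w ∧ s(v, w) ∈ c.edges)
    (hcX : ∃ e ∈ c.edges, e ∈ edgeCut G X) : ∃ e ∈ M.edgeSet ∩ edgeCut G X, e ∈ c.edges := by
  obtain ⟨M', hM', hM'c⟩ := hM.exists_edgeSet_eq_symmDiff_cycle hc
    fun v hv => (hMc v hv).imp fun _ hw => hw.2
  exact hX.exists_mem_of_edgeSet_eq_symmDiff hM hM' hM'c hcX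

theorem statement5_general (V : Type) (G : SimpleGraph V)
    (M : G.Subgraph) (hM : M.IsPerfectMatching)
    (a₁ a₂ : V) (c₁ : G.Walk a₁ a₁) (c₂ : G.Walk a₂ a₂)
    (hc₁ : c₁.IsCycle) (hc₂ : c₂.IsCycle)
    (hdisj : ∀ x : V, x ∈ c₁.support → x ∉ c₂.support)
    (hM₁ : ∀ v ∈ c₁.support, ∃ w ∈ c₁.support, M.Adj v w ∧ s(v, w) ∈ c₁.edges)
    (hM₂ : ∀ v ∈ c₂.support, ∃ w ∈ c₂.support, M.Adj v w ∧ s(v, w) ∈ c₂.edges)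
    (X : Set V)
    (hx₁ : ∃ e ∈ c₁.edges, e ∈ edgeCut G X)
    (hx₂ : ∃ e ∈ c₂.edges, e ∈ edgeCut G X) :
    ¬ IsTightCut G X := by
  intro hX
  obtain ⟨e₁, he₁X, he₁c⟩ := hX.exists_mem_edges_of_isCycle hM hc₁ hM₁ hx₁
  obtain ⟨e₂, he₂X, he₂c⟩ := hX.exists_mem_edges_of_isCycle hM hc₂ hM₂ hx₂
  obtain ⟨g, hg⟩ := Set.ncard_eq_one.mp (hX M hM)
  rw [hg] at he₁X he₂X
  rw [← he₁X.trans he₂X.symm] at he₂c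
  induction e₁ using Sym2.ind with
  | _ v w =>
    exact hdisj v (c₁.fst_mem_support_of_mem_edges he₁c) (c₂.fst_mem_support_of_mem_edges he₂c)

/-- If `C₁, C₂` are disjoint cycles of a matching covered graph `G`
that are both `M`-conformal for a perfect matching `M`, then no edge cut `∂(X)`
meeting both cycles is a tight cut. -/
theorem statement5 (V : Type) [Finite V] (G : SimpleGraph V) (hmc : MatchingCovered G)
    (M : G.Subgraph) (hM : M.IsPerfectMatching)
    (a₁ a₂ : V) (c₁ : G.Walk a₁ a₁) (c₂ : G.Walk a₂ a₂)
    (hc₁ : c₁.IsCycle) (hc₂ : c₂.IsCycle)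
    (hdisj : ∀ x : V, x ∈ c₁.support → x ∉ c₂.support)
    (hM₁ : ∀ v ∈ c₁.support, ∃ w ∈ c₁.support, M.Adj v w ∧ s(v, w) ∈ c₁.edges)
    (hM₂ : ∀ v ∈ c₂.support, ∃ w ∈ c₂.support, M.Adj v w ∧ s(v, w) ∈ c₂.edges)
    (X : Set V)
    (hx₁ : ∃ e ∈ c₁.edges, e ∈ edgeCut G X)
    (hx₂ : ∃ e ∈ c₂.edges, e ∈ edgeCut G X) :
    ¬ IsTightCut G X :=
  statement5_general V G M hM a₁ a₂ c₁ c₂ hc₁ hc₂ hdisj hM₁ hM₂ X hx₁ hx₂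

end PaperMM
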